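/- arXiv:2203.05535 — 3 statements merged into one kernel-verified Lean document; each statement's English description precedes it below -/
import Mathlib

section
/- Let x_1, …, x_N be real numbers and let H ≥ 1 be a real number. Suppose that ‖x_n‖ ≥ H^{−1} for every n with 1 ≤ n ≤ N. Then Σ_{1 ≤ h ≤ H} |Σ_{n=1}^N e(h x_n)| ≥ N/6. -/
open Finset Real

/-- Distance from a real number to the nearest integer. -/
noncomputable def nearestIntDist (t : ℝ) : ℝ := |t - round t|

/-- e(z) = exp(2πiz). -/
noncomputable def eR (z : ℝ) : ℂ := Complex.exp (2 * Real.pi * Complex.I * z)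

namespace BakerAux

/-- Chebyshev-type coefficient vector, supported on `0 ≤ j < K`. -/
noncomputable def bb (K : ℕ) (j : ℤ) : ℝ :=
  if 0 ≤ j ∧ j < (K : ℤ) then Real.sin (((j : ℝ) + 1) * (π / ((K : ℝ) + 1))) else 0

/-- Autocorrelation of `bb`. -/
noncomputable def rr (K : ℕ) (m : ℤ) : ℝ :=
  ∑ j ∈ Finset.Icc (0 : ℤ) ((K : ℤ) - 1), bb K j * bb K (j + m)

/-- Kernel coefficients. -/
noncomputable def cc (K : ℕ) (t : ℝ) (h : ℤ) : ℝ :=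
  (rr K (h - 1) + rr K (h + 1)) / 2 - t * rr K h

lemma bb_eq_zero {K : ℕ} {j : ℤ} (h : ¬(0 ≤ j ∧ j < (K : ℤ))) : bb K j = 0 := if_neg h

lemma bb_nonneg (K : ℕ) (j : ℤ) : 0 ≤ bb K j := by
  unfold bb
  split_ifs with h
  · apply Real.sin_nonneg_of_nonneg_of_le_pi
    · have h0 : (0:ℝ) ≤ (j:ℝ) := by exact_mod_cast h.1
      have : 0 < π / ((K:ℝ)+1) := by positivity
      positivity
    · have h1 : (j:ℝ) + 1 ≤ (K:ℝ) := by exact_mod_cast h.2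
      have hK : (0:ℝ) < (K:ℝ) + 1 := by positivity
      calc ((j:ℝ)+1) * (π / ((K:ℝ)+1)) ≤ ((K:ℝ)+1) * (π / ((K:ℝ)+1)) := by
            apply mul_le_mul_of_nonneg_right (by linarith) (by positivity)
        _ = π := by field_simp
  · exact le_rfl

lemma bb_le_one (K : ℕ) (j : ℤ) : bb K j ≤ 1 := by
  unfold bb
  split_ifs with h
  · exact Real.sin_le_one _
  · norm_num


/-- On the closed range `-1 ≤ j ≤ K`, `bb` agrees with the full sine formula. -/
lemma bb_eq_on {K : ℕ} (hK : 1 ≤ K) {j : ℤ} (h1 : -1 ≤ j) (h2 : j ≤ (K : ℤ)) :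
    bb K j = Real.sin (((j : ℝ) + 1) * (π / ((K : ℝ) + 1))) := by
  unfold bb
  split_ifs with h
  · rfl
  · rcases (by omega : j = -1 ∨ j = (K : ℤ)) with rfl | rfl
    · norm_num
    · have : (((K:ℤ) : ℝ) + 1) * (π / ((K : ℝ) + 1)) = π := by
        push_cast
        field_simp
      rw [this, Real.sin_pi]

/-- The key three-term recurrence with defects only at `m = -1` and `m = K`. -/
lemma bb_rec {K : ℕ} (hK : 1 ≤ K) (m : ℤ) :
    (bb K (m - 1) + bb K (m + 1)) / 2 - Real.cos (π / ((K : ℝ) + 1)) * bb K m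
      = if m = -1 ∨ m = (K : ℤ) then Real.sin (π / ((K : ℝ) + 1)) / 2 else 0 := by
  set γ := π / ((K : ℝ) + 1) with hγ
  have key : ∀ a : ℝ, Real.sin (a - γ) + Real.sin (a + γ) = 2 * Real.cos γ * Real.sin a := by
    intro a
    rw [Real.sin_add, Real.sin_sub]
    ring
  rcases lt_trichotomy m (-1) with hm | hm | hm
  · rw [if_neg (by omega)]
    rw [bb_eq_zero (by omega), bb_eq_zero (by omega), bb_eq_zero (by omega)]
    ring
  · subst hm
    rw [if_pos (Or.inl rfl)]
    rw [bb_eq_zero (j := -1-1) (by omega), bb_eq_zero (j := -1) (by omega)]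
    have h0 : bb K (-1+1) = Real.sin γ := by
      rw [bb_eq_on hK (by omega) (by omega)]
      norm_num
      rfl
    rw [h0]
    ring
  · rcases lt_trichotomy m (K : ℤ) with hm2 | hm2 | hm2
    · -- 0 ≤ m ≤ K - 1 : recurrence holds exactly
      rw [if_neg (by omega)]
      rw [bb_eq_on hK (by omega) (by omega), bb_eq_on hK (by omega) (by omega),
        bb_eq_on hK (by omega) (by omega)]
      have e1 : ((m : ℝ) - 1 + 1) * γ = ((m : ℝ) + 1) * γ - γ := by push_cast; ring
      have e2 : ((m : ℝ) + 1 + 1) * γ = ((m : ℝ) + 1) * γ + γ := by push_cast; ring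
      push_cast
      rw [e1, e2]
      have := key (((m : ℝ) + 1) * γ)
      linarith
    · subst hm2
      rw [if_pos (Or.inr rfl)]
      rw [bb_eq_zero (j := (K:ℤ)) (by omega), bb_eq_zero (j := (K:ℤ)+1) (by omega)]
      have : bb K ((K : ℤ) - 1) = Real.sin γ := by
        rw [bb_eq_on hK (by omega) (by omega)]
        have : (((K:ℤ) - 1 : ℤ) : ℝ) + 1 = (K : ℝ) := by push_cast; ring
        rw [this]
        have hπ : (K : ℝ) * γ = π - γ := by
          rw [hγ]
          have : (K : ℝ) + 1 ≠ 0 := by positivity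
          field_simp
          ring
        rw [hπ, Real.sin_pi_sub]
      rw [this]
      ring
    · rw [if_neg (by omega)]
      rw [bb_eq_zero (by omega), bb_eq_zero (by omega), bb_eq_zero (by omega)]
      ring


lemma rr_eq_zero {K : ℕ} {m : ℤ} (h : (K : ℤ) ≤ m ∨ m ≤ -(K : ℤ)) : rr K m = 0 := by
  unfold rr
  apply Finset.sum_eq_zero
  intro j hj
  rw [Finset.mem_Icc] at hj
  rcases h with h | h
  · rw [bb_eq_zero (j := j + m) (by omega), mul_zero]
  · rw [bb_eq_zero (j := j + m) (by omega), mul_zero]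

lemma rr_sq_le (K : ℕ) (s : Finset ℤ) :
    ∑ j ∈ s, (bb K j) ^ 2 ≤ rr K 0 := by
  have hrr : rr K 0 = ∑ j ∈ Finset.Icc (0 : ℤ) ((K : ℤ) - 1), (bb K j) ^ 2 := by
    unfold rr
    apply Finset.sum_congr rfl
    intro j _
    rw [add_zero, sq]
  rw [hrr]
  have h1 : ∑ j ∈ s, (bb K j) ^ 2 = ∑ j ∈ s ∩ Finset.Icc (0 : ℤ) ((K : ℤ) - 1), (bb K j) ^ 2 := by
    symm
    apply Finset.sum_subset (Finset.inter_subset_left)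
    intro x hx hx2
    have : ¬(0 ≤ x ∧ x < (K : ℤ)) := by
      intro hc
      exact hx2 (Finset.mem_inter.2 ⟨hx, Finset.mem_Icc.2 ⟨hc.1, by omega⟩⟩)
    rw [bb_eq_zero this]
    ring
  rw [h1]
  apply Finset.sum_le_sum_of_subset_of_nonneg (Finset.inter_subset_right)
  intro j _ _
  positivity

lemma rr_abs_le (K : ℕ) (m : ℤ) : |rr K m| ≤ rr K 0 := by
  have h1 : |rr K m| ≤ ∑ j ∈ Finset.Icc (0 : ℤ) ((K : ℤ) - 1),
      ((bb K j) ^ 2 + (bb K (j + m)) ^ 2) / 2 := by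
    refine (Finset.abs_sum_le_sum_abs _ _).trans (Finset.sum_le_sum ?_)
    intro j _
    rw [abs_mul, abs_of_nonneg (bb_nonneg K j), abs_of_nonneg (bb_nonneg K (j + m))]
    nlinarith [sq_nonneg (bb K j - bb K (j + m))]
  have h2 : ∑ j ∈ Finset.Icc (0 : ℤ) ((K : ℤ) - 1), (bb K (j + m)) ^ 2 ≤ rr K 0 := by
    have : ∑ j ∈ Finset.Icc (0 : ℤ) ((K : ℤ) - 1), (bb K (j + m)) ^ 2
        = ∑ l ∈ (Finset.Icc (0 : ℤ) ((K : ℤ) - 1)).map (addRightEmbedding m), (bb K l) ^ 2 := by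
      rw [Finset.sum_map]
      rfl
    rw [this]
    exact rr_sq_le K _
  have h3 : ∑ j ∈ Finset.Icc (0 : ℤ) ((K : ℤ) - 1), (bb K j) ^ 2 ≤ rr K 0 := rr_sq_le K _
  calc |rr K m| ≤ _ := h1
    _ = ((∑ j ∈ Finset.Icc (0 : ℤ) ((K : ℤ) - 1), (bb K j) ^ 2)
        + ∑ j ∈ Finset.Icc (0 : ℤ) ((K : ℤ) - 1), (bb K (j + m)) ^ 2) / 2 := by
      rw [← Finset.sum_add_distrib, ← Finset.sum_div]
    _ ≤ (rr K 0 + rr K 0) / 2 := by linarith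
    _ = rr K 0 := by ring

/-- Sum of cosines of the `q`-th roots of unity angles vanishes. -/
lemma sum_cos_eq_zero {q : ℕ} (hq : 2 ≤ q) :
    ∑ j ∈ Finset.range q, Real.cos ((j : ℝ) * (2 * π / q)) = 0 := by
  have hq0 : (q : ℝ) ≠ 0 := by positivity
  set ζ : ℂ := Complex.exp ((2 * π / q : ℝ) * Complex.I) with hζ
  have hpow : ∀ j : ℕ, ζ ^ j = Complex.exp ((((j : ℝ) * (2 * π / q) : ℝ)) * Complex.I) := by
    intro j
    rw [hζ, ← Complex.exp_nat_mul]
    congr 1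
    push_cast
    ring
  have hcos : ∀ j : ℕ, Real.cos ((j : ℝ) * (2 * π / q)) = (ζ ^ j).re := by
    intro j
    rw [hpow j, Complex.exp_ofReal_mul_I_re]
  have hζq : ζ ^ q = 1 := by
    rw [hpow q]
    have : ((q : ℝ) * (2 * π / q) : ℝ) = 2 * π := by field_simp
    rw [this]
    simpa using Complex.exp_two_pi_mul_I
  have hζ1 : ζ ≠ 1 := by
    intro hc
    rw [hζ, Complex.exp_eq_one_iff] at hc
    obtain ⟨n, hn⟩ := hc
    have him : (2 * π / q : ℝ) = (n : ℝ) * (2 * π) := by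
      have := congrArg Complex.im hn
      simpa using this
    have hπ : 0 < π := Real.pi_pos
    have h1 : (n : ℝ) = 1 / q := by
      field_simp at him ⊢
      nlinarith [him]
    have : 0 < (n : ℝ) := by rw [h1]; positivity
    have h2 : (n : ℝ) < 1 := by
      rw [h1]
      rw [div_lt_one (by positivity)]
      exact_mod_cast hq
    have : 0 < n := by exact_mod_cast this
    have : n < 1 := by exact_mod_cast h2
    omega
  have hsum : ∑ j ∈ Finset.range q, ζ ^ j = 0 := by
    rw [geom_sum_eq hζ1, hζq]
    simp
  calc ∑ j ∈ Finset.range q, Real.cos ((j : ℝ) * (2 * π / q))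
      = ∑ j ∈ Finset.range q, (ζ ^ j).re := Finset.sum_congr rfl (fun j _ => hcos j)
    _ = (∑ j ∈ Finset.range q, ζ ^ j).re := (Complex.re_sum _ _).symm
    _ = 0 := by rw [hsum]; rfl


lemma rr_zero_val {K : ℕ} (hK : 1 ≤ K) : rr K 0 = ((K : ℝ) + 1) / 2 := by
  set γ := π / ((K : ℝ) + 1) with hγ
  have h1 : rr K 0 = ∑ j ∈ Finset.range K, Real.sin (((j : ℝ) + 1) * γ) ^ 2 := by
    unfold rr
    rw [Finset.sum_nbij' (i := fun j : ℤ => j.toNat) (j := fun n : ℕ => (n : ℤ))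
      (t := Finset.range K) (g := fun n : ℕ => Real.sin (((n : ℝ) + 1) * γ) ^ 2)]
    · intro a ha
      rw [Finset.mem_Icc] at ha
      rw [Finset.mem_range]
      omega
    · intro b hb
      rw [Finset.mem_range] at hb
      rw [Finset.mem_Icc]
      omega
    · intro a ha
      rw [Finset.mem_Icc] at ha
      omega
    · intro b _
      simp
    · intro a ha
      rw [Finset.mem_Icc] at ha
      rw [add_zero, bb_eq_on hK (by omega) (by omega), ← sq]
      congr 2
      have : ((a.toNat : ℕ) : ℝ) = (a : ℝ) := by
        have : ((a.toNat : ℕ) : ℤ) = a := by omega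
        exact_mod_cast congrArg (fun z : ℤ => (z : ℝ)) this
      rw [this]
  have h2 : ∑ j ∈ Finset.range (K + 1), Real.sin ((j : ℝ) * γ) ^ 2
      = ∑ j ∈ Finset.range K, Real.sin (((j : ℝ) + 1) * γ) ^ 2 := by
    rw [Finset.sum_range_succ']
    push_cast
    simp
  have h3 : ∑ j ∈ Finset.range (K + 1), Real.sin ((j : ℝ) * γ) ^ 2 = ((K : ℝ) + 1) / 2 := by
    have hq : 2 ≤ K + 1 := by omega
    have hz := sum_cos_eq_zero hq
    have hterm : ∀ j : ℕ, Real.sin ((j : ℝ) * γ) ^ 2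
        = 1 / 2 - Real.cos ((j : ℝ) * (2 * π / ((K : ℕ) + 1 : ℕ))) / 2 := by
      intro j
      rw [Real.sin_sq, Real.cos_sq]
      have : 2 * ((j : ℝ) * γ) = (j : ℝ) * (2 * π / ((K : ℕ) + 1 : ℕ)) := by
        rw [hγ]
        push_cast
        ring
      rw [this]
      ring
    rw [Finset.sum_congr rfl (fun j _ => hterm j), Finset.sum_sub_distrib]
    rw [← Finset.sum_div, ← Finset.sum_div, hz]
    rw [Finset.sum_const, Finset.card_range]
    push_cast
    ring
  rw [h1, ← h2, h3]


lemma srr {K : ℕ} (hK : 1 ≤ K) (h : ℤ) :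
    (rr K (h - 1) + rr K (h + 1)) / 2 - Real.cos (π / ((K : ℝ) + 1)) * rr K h
      = (Real.sin (π / ((K : ℝ) + 1)) / 2) * (bb K (-1 - h) + bb K ((K : ℤ) - h)) := by
  set γ := π / ((K : ℝ) + 1) with hγ
  set I := Finset.Icc (0 : ℤ) ((K : ℤ) - 1) with hI
  have step1 : (rr K (h - 1) + rr K (h + 1)) / 2 - Real.cos γ * rr K h
      = ∑ j ∈ I, bb K j * ((bb K (j + h - 1) + bb K (j + h + 1)) / 2
          - Real.cos γ * bb K (j + h)) := by
    unfold rr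
    rw [← Finset.sum_add_distrib, Finset.sum_div, Finset.mul_sum, ← Finset.sum_sub_distrib]
    apply Finset.sum_congr rfl
    intro j _
    have e1 : j + (h - 1) = j + h - 1 := by ring
    have e2 : j + (h + 1) = j + h + 1 := by ring
    rw [e1, e2]
    ring
  rw [step1]
  have step2 : ∀ j ∈ I, bb K j * ((bb K (j + h - 1) + bb K (j + h + 1)) / 2
          - Real.cos γ * bb K (j + h))
      = (if j = -1 - h then bb K j * (Real.sin γ / 2) else 0)
        + (if j = (K : ℤ) - h then bb K j * (Real.sin γ / 2) else 0) := by
    intro j _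
    rw [bb_rec hK (j + h)]
    by_cases h1 : j = -1 - h
    · rw [if_pos (by omega : j + h = -1 ∨ j + h = (K : ℤ)), if_pos h1, if_neg (by omega)]
      ring
    · by_cases h2 : j = (K : ℤ) - h
      · rw [if_pos (by omega : j + h = -1 ∨ j + h = (K : ℤ)), if_neg h1, if_pos h2]
        ring
      · rw [if_neg (by omega), if_neg h1, if_neg h2]
        ring
  rw [Finset.sum_congr rfl step2, Finset.sum_add_distrib,
    Finset.sum_ite_eq' I (-1 - h) (fun j => bb K j * (Real.sin γ / 2)),
    Finset.sum_ite_eq' I ((K : ℤ) - h) (fun j => bb K j * (Real.sin γ / 2))]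
  have mem1 : ∀ a : ℤ, (if a ∈ I then bb K a * (Real.sin γ / 2) else 0)
      = (Real.sin γ / 2) * bb K a := by
    intro a
    by_cases ha : a ∈ I
    · rw [if_pos ha]; ring
    · rw [if_neg ha, bb_eq_zero (j := a) (by rw [hI, Finset.mem_Icc] at ha; omega), mul_zero]
  rw [mem1, mem1]
  ring


lemma shift1 {K : ℕ} (g : ℤ → ℂ) :
    ∑ h ∈ Finset.Icc (-(K:ℤ)-1) ((K:ℤ)+1), ((rr K (h-1) : ℝ) : ℂ) * g h
      = ∑ h ∈ Finset.Icc (-(K:ℤ)-1) ((K:ℤ)+1), ((rr K h : ℝ) : ℂ) * g (h+1) := by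
  set F : ℤ → ℂ := fun t => ((rr K (t-1) : ℝ) : ℂ) * g t with hF
  have hFval : ∀ h : ℤ, ((rr K h : ℝ) : ℂ) * g (h+1) = F (h+1) := by
    intro h
    rw [hF]
    simp
  rw [Finset.sum_congr rfl (fun h _ => hFval h)]
  have hmap := Finset.map_add_right_Icc (-(K:ℤ)-1) ((K:ℤ)+1) (1:ℤ)
  have h1 : ∑ h ∈ Finset.Icc (-(K:ℤ)-1) ((K:ℤ)+1), F (h+1)
      = ∑ t ∈ Finset.Icc (-(K:ℤ)-1+1) ((K:ℤ)+1+1), F t := by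
    rw [← hmap, Finset.sum_map]
    simp
  rw [h1]
  have h2 : ∑ t ∈ Finset.Icc (-(K:ℤ)-1+1) ((K:ℤ)+1+1), F t
      = ∑ t ∈ Finset.Icc (-(K:ℤ)-1) ((K:ℤ)+1+1), F t := by
    apply Finset.sum_subset (Finset.Icc_subset_Icc (by omega) (by omega))
    intro x hx hx2
    rw [Finset.mem_Icc] at hx
    have hxe : ¬(-(K:ℤ)-1+1 ≤ x ∧ x ≤ (K:ℤ)+1+1) := by
      intro hc
      exact hx2 (Finset.mem_Icc.2 hc)
    have : x = -(K:ℤ)-1 := by omega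
    rw [this, hF]
    simp only []
    rw [rr_eq_zero (K := K) (m := -(K:ℤ)-1-1) (Or.inr (by omega))]
    simp
  have h3 : ∑ t ∈ Finset.Icc (-(K:ℤ)-1) ((K:ℤ)+1), F t
      = ∑ t ∈ Finset.Icc (-(K:ℤ)-1) ((K:ℤ)+1+1), F t := by
    apply Finset.sum_subset (Finset.Icc_subset_Icc (by omega) (by omega))
    intro x hx hx2
    rw [Finset.mem_Icc] at hx
    have hxe : ¬(-(K:ℤ)-1 ≤ x ∧ x ≤ (K:ℤ)+1) := by
      intro hc
      exact hx2 (Finset.mem_Icc.2 hc)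
    have : x = (K:ℤ)+1+1 := by omega
    rw [this, hF]
    simp only []
    rw [rr_eq_zero (K := K) (m := (K:ℤ)+1+1-1) (Or.inl (by omega))]
    simp
  rw [h2, ← h3]

lemma shift2 {K : ℕ} (g : ℤ → ℂ) :
    ∑ h ∈ Finset.Icc (-(K:ℤ)-1) ((K:ℤ)+1), ((rr K (h+1) : ℝ) : ℂ) * g h
      = ∑ h ∈ Finset.Icc (-(K:ℤ)-1) ((K:ℤ)+1), ((rr K h : ℝ) : ℂ) * g (h-1) := by
  set F : ℤ → ℂ := fun t => ((rr K (t+1) : ℝ) : ℂ) * g t with hF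
  have hFval : ∀ h : ℤ, ((rr K h : ℝ) : ℂ) * g (h-1) = F (h-1) := by
    intro h
    rw [hF]
    simp
  rw [Finset.sum_congr rfl (fun h _ => hFval h)]
  have hmap := Finset.map_add_right_Icc (-(K:ℤ)-1) ((K:ℤ)+1) (-1:ℤ)
  have h1 : ∑ h ∈ Finset.Icc (-(K:ℤ)-1) ((K:ℤ)+1), F (h-1)
      = ∑ t ∈ Finset.Icc (-(K:ℤ)-1+(-1)) ((K:ℤ)+1+(-1)), F t := by
    rw [← hmap, Finset.sum_map]
    simp [sub_eq_add_neg]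
  rw [h1]
  have h2 : ∑ t ∈ Finset.Icc (-(K:ℤ)-1+(-1)) ((K:ℤ)+1+(-1)), F t
      = ∑ t ∈ Finset.Icc (-(K:ℤ)-1+(-1)) ((K:ℤ)+1), F t := by
    apply Finset.sum_subset (Finset.Icc_subset_Icc (by omega) (by omega))
    intro x hx hx2
    rw [Finset.mem_Icc] at hx
    have hxe : ¬(-(K:ℤ)-1+(-1) ≤ x ∧ x ≤ (K:ℤ)+1+(-1)) := by
      intro hc
      exact hx2 (Finset.mem_Icc.2 hc)
    have : x = (K:ℤ)+1 := by omega
    rw [this, hF]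
    simp only []
    rw [rr_eq_zero (K := K) (m := (K:ℤ)+1+1) (Or.inl (by omega))]
    simp
  have h3 : ∑ t ∈ Finset.Icc (-(K:ℤ)-1) ((K:ℤ)+1), F t
      = ∑ t ∈ Finset.Icc (-(K:ℤ)-1+(-1)) ((K:ℤ)+1), F t := by
    apply Finset.sum_subset (Finset.Icc_subset_Icc (by omega) (by omega))
    intro x hx hx2
    rw [Finset.mem_Icc] at hx
    have hxe : ¬(-(K:ℤ)-1 ≤ x ∧ x ≤ (K:ℤ)+1) := by
      intro hc
      exact hx2 (Finset.mem_Icc.2 hc)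
    have : x = -(K:ℤ)-1+(-1) := by omega
    rw [this, hF]
    simp only []
    rw [rr_eq_zero (K := K) (m := -(K:ℤ)-1+(-1)+1) (Or.inr (by omega))]
    simp
  rw [h2, ← h3]



lemma corr {K : ℕ} {z : ℂ} (hz : z ≠ 0) :
    ∑ h ∈ Finset.Icc (-(K:ℤ)-1) ((K:ℤ)+1), ((rr K h : ℝ) : ℂ) * z ^ h
      = (∑ j ∈ Finset.Icc (0:ℤ) ((K:ℤ)-1), ((bb K j : ℝ) : ℂ) * z ^ (-j))
        * (∑ l ∈ Finset.Icc (0:ℤ) ((K:ℤ)-1), ((bb K l : ℝ) : ℂ) * z ^ l) := by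
  set I := Finset.Icc (0 : ℤ) ((K : ℤ) - 1) with hI
  set Hs := Finset.Icc (-(K:ℤ)-1) ((K:ℤ)+1) with hHs
  set B : ℂ := ∑ l ∈ I, ((bb K l : ℝ) : ℂ) * z ^ l with hB
  have e1 : ∀ h : ℤ, ((rr K h : ℝ) : ℂ) * z ^ h
      = ∑ j ∈ I, ((bb K j : ℝ) : ℂ) * (((bb K (j + h) : ℝ) : ℂ) * z ^ h) := by
    intro h
    have : ((rr K h : ℝ) : ℂ) = ∑ j ∈ I, ((bb K j : ℝ) : ℂ) * ((bb K (j + h) : ℝ) : ℂ) := by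
      rw [rr]
      push_cast
      rfl
    rw [this, Finset.sum_mul]
    exact Finset.sum_congr rfl (fun j _ => by ring)
  rw [Finset.sum_congr rfl (fun h _ => e1 h), Finset.sum_comm]
  have inner : ∀ j ∈ I, ∑ h ∈ Hs, ((bb K j : ℝ) : ℂ) * (((bb K (j + h) : ℝ) : ℂ) * z ^ h)
      = ((bb K j : ℝ) : ℂ) * (B * z ^ (-j)) := by
    intro j hj
    rw [← Finset.mul_sum]
    congr 1
    have hjm : 0 ≤ j ∧ j ≤ (K:ℤ) - 1 := Finset.mem_Icc.1 (hI ▸ hj)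
    set G : ℤ → ℂ := fun l => ((bb K l : ℝ) : ℂ) * z ^ (l - j) with hG
    have hGval : ∀ h : ℤ, ((bb K (j + h) : ℝ) : ℂ) * z ^ h = G (j + h) := by
      intro h
      rw [hG]
      simp
    rw [Finset.sum_congr rfl (fun h _ => hGval h)]
    have hmap := Finset.map_add_left_Icc (-(K:ℤ)-1) ((K:ℤ)+1) j
    have h1 : ∑ h ∈ Hs, G (j + h) = ∑ t ∈ Finset.Icc (j + (-(K:ℤ)-1)) (j + ((K:ℤ)+1)), G t := by
      rw [← hmap, Finset.sum_map]
      simp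
      rfl
    rw [h1]
    have h2 : ∑ t ∈ Finset.Icc (j + (-(K:ℤ)-1)) (j + ((K:ℤ)+1)), G t = ∑ t ∈ I, G t := by
      symm
      apply Finset.sum_subset
      · rw [hI]
        exact Finset.Icc_subset_Icc (by omega) (by omega)
      · intro x _ hx2
        have : ¬(0 ≤ x ∧ x ≤ (K:ℤ) - 1) := by
          intro hc
          exact hx2 (hI ▸ Finset.mem_Icc.2 hc)
        rw [hG]
        simp only []
        rw [bb_eq_zero (j := x) (by omega)]
        simp
    rw [h2, hB, Finset.sum_mul]
    apply Finset.sum_congr rfl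
    intro l _
    rw [hG]
    simp only []
    rw [zpow_sub₀ hz, zpow_neg, div_eq_mul_inv]
    ring
  rw [Finset.sum_congr rfl inner, Finset.sum_mul]
  apply Finset.sum_congr rfl
  intro j _
  ring


lemma point_id {K : ℕ} (co : ℝ) (t : ℝ) :
    ∑ h ∈ Finset.Icc (-(K:ℤ)-1) ((K:ℤ)+1), ((cc K co h : ℝ) : ℂ) * (eR t) ^ h
      = (((Real.cos (2*π*t) - co) : ℝ) : ℂ)
        * ((Complex.normSq (∑ l ∈ Finset.Icc (0:ℤ) ((K:ℤ)-1),
            ((bb K l : ℝ) : ℂ) * (eR t) ^ l) : ℝ) : ℂ) := by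
  set z : ℂ := eR t with hzdef
  have hz : z ≠ 0 := Complex.exp_ne_zero _
  set Hs := Finset.Icc (-(K:ℤ)-1) ((K:ℤ)+1) with hHs
  set I := Finset.Icc (0 : ℤ) ((K : ℤ) - 1) with hI
  set B : ℂ := ∑ l ∈ I, ((bb K l : ℝ) : ℂ) * z ^ l with hB
  -- step A : expand cc and use the shift lemmas
  have e1 : ∀ h : ℤ, ((cc K co h : ℝ) : ℂ) * z ^ h
      = ((rr K (h-1) : ℝ) : ℂ) * z ^ h / 2 + ((rr K (h+1) : ℝ) : ℂ) * z ^ h / 2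
        - (co : ℂ) * (((rr K h : ℝ) : ℂ) * z ^ h) := by
    intro h
    rw [cc]
    push_cast
    ring
  have eA : ∑ h ∈ Hs, ((cc K co h : ℝ) : ℂ) * z ^ h
      = (∑ h ∈ Hs, ((rr K (h-1) : ℝ) : ℂ) * z ^ h) / 2
        + (∑ h ∈ Hs, ((rr K (h+1) : ℝ) : ℂ) * z ^ h) / 2
        - (co : ℂ) * ∑ h ∈ Hs, ((rr K h : ℝ) : ℂ) * z ^ h := by
    rw [Finset.sum_congr rfl (fun h _ => e1 h), Finset.sum_sub_distrib,
      Finset.sum_add_distrib, ← Finset.sum_div, ← Finset.sum_div, ← Finset.mul_sum]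
  rw [eA, shift1 (fun h => z ^ h), shift2 (fun h => z ^ h)]
  have e2 : ∀ h : ℤ, h ∈ Hs → (((rr K h : ℝ) : ℂ) * z ^ (h+1)) = ((rr K h : ℝ) : ℂ) * z ^ h * z := by
    intro h _
    rw [zpow_add_one₀ hz]
    ring
  have e3 : ∀ h : ℤ, h ∈ Hs → (((rr K h : ℝ) : ℂ) * z ^ (h-1)) = ((rr K h : ℝ) : ℂ) * z ^ h * z⁻¹ := by
    intro h _
    rw [zpow_sub_one₀ hz]
    ring
  rw [Finset.sum_congr rfl e2, Finset.sum_congr rfl e3, ← Finset.sum_mul, ← Finset.sum_mul]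
  have ecorr := corr (K := K) hz
  rw [hHs, hI] at *
  rw [ecorr]
  -- identify the conjugate sum with conj B
  have hconjz : (starRingEnd ℂ) z = z⁻¹ := by
    rw [hzdef, eR, ← Complex.exp_conj]
    have hcu : (starRingEnd ℂ) (2 * (π:ℂ) * Complex.I * (t:ℂ))
        = -(2 * (π:ℂ) * Complex.I * (t:ℂ)) := by
      simp [map_mul, Complex.conj_I, Complex.conj_ofReal, map_ofNat]
    rw [hcu, Complex.exp_neg]
  have hconjB : ∑ j ∈ Finset.Icc (0:ℤ) ((K:ℤ)-1), ((bb K j : ℝ) : ℂ) * z ^ (-j)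
      = (starRingEnd ℂ) B := by
    rw [hB, map_sum]
    apply Finset.sum_congr rfl
    intro j _
    rw [map_mul, map_zpow₀, hconjz, Complex.conj_ofReal, inv_zpow, zpow_neg]
  rw [hconjB]
  -- compute z + z⁻¹ = 2 cos (2 π t)
  have hzw : z = Complex.exp (((2*π*t : ℝ) : ℂ) * Complex.I) := by
    rw [hzdef, eR]
    congr 1
    push_cast
    ring
  have hsum2 : z + z⁻¹ = 2 * ((Real.cos (2*π*t) : ℝ) : ℂ) := by
    rw [hzw, ← Complex.exp_neg]
    have : -(((2*π*t : ℝ) : ℂ) * Complex.I) = ((-(2*π*t) : ℝ) : ℂ) * Complex.I := by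
      push_cast
      ring
    rw [this, Complex.exp_mul_I, Complex.exp_mul_I, Complex.ofReal_neg, Complex.cos_neg,
      Complex.sin_neg, Complex.ofReal_cos]
    ring
  have hBconj : B * (starRingEnd ℂ) B = ((Complex.normSq B : ℝ) : ℂ) := Complex.mul_conj B
  calc (starRingEnd ℂ) B * B * z / 2 + (starRingEnd ℂ) B * B * z⁻¹ / 2
        - (co : ℂ) * ((starRingEnd ℂ) B * B)
      = ((z + z⁻¹) / 2 - (co : ℂ)) * (B * (starRingEnd ℂ) B) := by ring
    _ = (((Real.cos (2*π*t) - co) : ℝ) : ℂ) * ((Complex.normSq B : ℝ) : ℂ) := by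
        rw [hsum2, hBconj]
        push_cast
        ring

end BakerAux

set_option maxHeartbeats 1000000 in
open BakerAux in
theorem baker_lower_bound_exponential_sum
    (N : ℕ) (x : ℕ → ℝ) (H : ℝ) (hH : 1 ≤ H)
    (hx : ∀ n : ℕ, 1 ≤ n → n ≤ N → nearestIntDist (x n) ≥ H⁻¹) :
    ∑ h ∈ Finset.Icc 1 ⌊H⌋₊,
        ‖∑ n ∈ Finset.Icc 1 N, eR ((h : ℝ) * x n)‖ ≥ (N : ℝ) / 6 := by
  rcases Nat.eq_zero_or_pos N with hN | hN
  · subst hN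
    simp
  have hHpos : 0 < H := lt_of_lt_of_le one_pos hH
  have hH2 : 2 ≤ H := by
    have h1 := hx 1 le_rfl hN
    have h2 : nearestIntDist (x 1) ≤ 1/2 := by
      rw [nearestIntDist]
      exact abs_sub_round (x 1)
    have h3 : H⁻¹ ≤ 1/2 := le_trans h1 h2
    have h4 : H⁻¹ * H = 1 := inv_mul_cancel₀ (ne_of_gt hHpos)
    nlinarith
  set K := ⌊H⌋₊ with hKdef
  have hK2 : 2 ≤ K := Nat.le_floor (by exact_mod_cast hH2)
  have hK1 : 1 ≤ K := le_trans one_le_two hK2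
  have hKH : (K : ℝ) ≤ H := Nat.floor_le (le_of_lt hHpos)
  have hHQ : H < (K : ℝ) + 1 := Nat.lt_floor_add_one H
  set Q : ℝ := (K : ℝ) + 1 with hQdef
  have hQ3 : (3 : ℝ) ≤ Q := by
    have : (2:ℝ) ≤ (K:ℝ) := by exact_mod_cast hK2
    rw [hQdef]
    linarith
  have hπ := Real.pi_pos
  set γ : ℝ := π / Q with hγdef
  set θ : ℝ := 2 * π / H with hθdef
  have hγpos : 0 < γ := by rw [hγdef]; positivity
  have hθpos : 0 < θ := by rw [hθdef]; positivity
  have hθπ : θ ≤ π := by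
    rw [hθdef, div_le_iff₀ hHpos]
    nlinarith
  have hθ2γ : 2 * γ ≤ θ := by
    rw [hγdef, hθdef, show 2 * (π / Q) = 2*π/Q from by ring]
    exact div_le_div_of_nonneg_left (by linarith) hHpos (le_of_lt hHQ)
  have hγθ : γ < θ := by
    have : 0 < γ := hγpos
    linarith
  have hγsmall : γ ≤ π / 3 := by
    rw [hγdef]
    apply div_le_div_of_nonneg_left (le_of_lt hπ) (by linarith) hQ3
  -- the exponential sums
  set S : ℤ → ℂ := fun m => ∑ n ∈ Finset.Icc 1 N, eR ((m : ℝ) * x n) with hSdef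
  set co : ℝ := Real.cos θ with hcodef
  set c : ℤ → ℝ := fun h => cc K co h with hcdef
  set Hs := Finset.Icc (-(K:ℤ)-1) ((K:ℤ)+1) with hHsdef
  set T : ℂ := ∑ h ∈ Hs, ((c h : ℝ) : ℂ) * S h with hTdef
  -- Step : cosine bound at the points
  have hcosn : ∀ n, 1 ≤ n → n ≤ N → Real.cos (2*π*(x n)) ≤ co := by
    intro n h1n h2n
    have hd1 : H⁻¹ ≤ |x n - round (x n)| := hx n h1n h2n
    have hd2 : |x n - round (x n)| ≤ 1/2 := abs_sub_round (x n)
    have e1 : Real.cos (2*π*(x n)) = Real.cos (2*π*(x n - round (x n))) := by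
      have : 2*π*(x n) = 2*π*(x n - round (x n)) + (round (x n)) * (2*π) := by ring
      rw [this, Real.cos_add_int_mul_two_pi]
    have e2 : Real.cos (2*π*(x n - round (x n))) = Real.cos (2*π*|x n - round (x n)|) := by
      rcases abs_cases (x n - round (x n)) with ⟨hcc, _⟩ | ⟨hcc, _⟩
      · rw [hcc]
      · rw [hcc, show 2*π*(-(x n - round (x n))) = -(2*π*(x n - round (x n))) from by ring,
          Real.cos_neg]
    rw [e1, e2, hcodef]
    apply Real.cos_le_cos_of_nonneg_of_le_pi (le_of_lt hθpos)
    · nlinarith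
    · rw [hθdef]
      rw [div_le_iff₀ hHpos]
      have h5 : H⁻¹ * H = 1 := inv_mul_cancel₀ (ne_of_gt hHpos)
      nlinarith [mul_le_mul_of_nonneg_left hd1 (show (0:ℝ) ≤ 2*π*H from by positivity)]
  -- Step : T.re ≤ 0 via pointwise kernel positivity
  have hTre_nonpos : T.re ≤ 0 := by
    have hSh : ∀ h : ℤ, S h = ∑ n ∈ Finset.Icc 1 N, (eR (x n)) ^ h := by
      intro h
      rw [hSdef]
      apply Finset.sum_congr rfl
      intro n _
      rw [eR, eR, ← Complex.exp_int_mul]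
      congr 1
      push_cast
      ring
    have hTswap : T = ∑ n ∈ Finset.Icc 1 N, ∑ h ∈ Hs, ((c h : ℝ) : ℂ) * (eR (x n)) ^ h := by
      rw [hTdef]
      rw [Finset.sum_congr rfl (fun h _ => by rw [hSh h, Finset.mul_sum])]
      exact Finset.sum_comm
    rw [hTswap, Complex.re_sum]
    apply Finset.sum_nonpos
    intro n hn
    rw [Finset.mem_Icc] at hn
    have hpt := point_id (K := K) co (x n)
    simp only [hcdef, hHsdef]
    rw [hpt, ← Complex.ofReal_mul, Complex.ofReal_re]
    have h1 : Real.cos (2*π*(x n)) - co ≤ 0 := by linarith [hcosn n hn.1 hn.2]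
    have h2 := Complex.normSq_nonneg (∑ l ∈ Finset.Icc (0:ℤ) ((K:ℤ)-1),
      ((bb K l : ℝ) : ℂ) * (eR (x n)) ^ l)
    have h3 := mul_nonneg (neg_nonneg.2 h1) h2
    linarith [h3]
  -- Step : coefficient estimates
  have hrr0 : rr K 0 = Q / 2 := by rw [rr_zero_val hK1, hQdef]
  have hcoγ : co < Real.cos γ := by
    rw [hcodef]
    exact Real.cos_lt_cos_of_nonneg_of_le_pi (le_of_lt hγpos) hθπ hγθ
  have hc0 : c 0 = (Real.cos γ - co) * (Q/2) := by
    have hs0 := srr hK1 0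
    rw [bb_eq_zero (j := -1-0) (by omega), bb_eq_zero (j := (K:ℤ)-0) (by omega)] at hs0
    rw [← hrr0]
    show cc K co 0 = _
    rw [cc]
    simp only [hγdef, hQdef]
    norm_num at hs0 ⊢
    linarith [hs0]
  have hc0pos : 0 < c 0 := by
    rw [hc0]
    have : 0 < Q := by linarith
    nlinarith
  have hkey : Real.sin γ ≤ 4 * c 0 := by
    have hco2γ : co ≤ Real.cos (2*γ) := by
      rw [hcodef]
      exact Real.cos_le_cos_of_nonneg_of_le_pi (by linarith) hθπ hθ2γ
    have main2 : Real.sin γ ≤ 2*Q*(Real.cos γ - Real.cos (2*γ)) := by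
      have hx2 : 0 < γ/2 := by linarith
      have hx3 : γ/2 < π/2 := by linarith
      have hx4 : 3*(γ/2) ≤ π/2 := by linarith
      have hcosp : 0 < Real.cos (γ/2) :=
        Real.cos_pos_of_mem_Ioo ⟨by linarith, hx3⟩
      have hsinp : 0 < Real.sin (γ/2) := Real.sin_pos_of_pos_of_lt_pi hx2 (by linarith)
      have hsin3 : Real.sin (γ/2) ≤ Real.sin (3*(γ/2)) :=
        Real.sin_le_sin_of_le_of_le_pi_div_two (by linarith) hx4 (by linarith)
      have htan : γ/2 < Real.tan (γ/2) := Real.lt_tan hx2 hx3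
      have htan' : (γ/2) * Real.cos (γ/2) < Real.sin (γ/2) := by
        rw [Real.tan_eq_sin_div_cos, lt_div_iff₀ hcosp] at htan
        linarith [htan]
      have hQγ : Q * γ = π := by
        rw [hγdef]
        field_simp
      have hsin2 : Real.sin γ = 2 * Real.sin (γ/2) * Real.cos (γ/2) := by
        have h2m := Real.sin_two_mul (γ/2)
        rw [show 2*(γ/2) = γ from by ring] at h2m
        exact h2m
      have hcosdiff : Real.cos γ - Real.cos (2*γ)
          = 2 * Real.sin (3*(γ/2)) * Real.sin (γ/2) := by
        rw [Real.cos_sub_cos]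
        rw [show (γ + 2*γ)/2 = 3*(γ/2) from by ring, show (γ - 2*γ)/2 = -(γ/2) from by ring,
          Real.sin_neg]
        ring
      rw [hsin2, hcosdiff]
      have hQpos : (0:ℝ) < Q := by linarith
      -- cos (γ/2) ≤ 2 Q sin(3 γ/2)
      have hmain : Real.cos (γ/2) ≤ 2*Q*Real.sin (3*(γ/2)) := by
        have hstep : 2*Q*((γ/2) * Real.cos (γ/2)) = π * Real.cos (γ/2) := by
          rw [← hQγ]
          ring
        nlinarith [mul_le_mul_of_nonneg_left hsin3 (show (0:ℝ) ≤ 2*Q from by linarith),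
          mul_lt_mul_of_pos_left htan' (show (0:ℝ) < 2*Q from by linarith),
          Real.pi_gt_three, hcosp]
      nlinarith [mul_le_mul_of_nonneg_left hmain (show (0:ℝ) ≤ 2 * Real.sin (γ/2) from by linarith)]
    rw [hc0]
    nlinarith [main2, hco2γ, hQ3]
  have hcbound : ∀ h : ℤ, h ≠ 0 → |c h| ≤ 3 * c 0 := by
    intro h hh
    have hsγ : 0 ≤ Real.sin γ := Real.sin_nonneg_of_nonneg_of_le_pi (le_of_lt hγpos) (by linarith)
    have hsrr := srr hK1 h
    have hch : c h = (Real.sin γ / 2) * (bb K (-1-h) + bb K ((K:ℤ)-h))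
        + (Real.cos γ - co) * rr K h := by
      show cc K co h = _
      rw [cc]
      simp only [hγdef, hQdef] at hsrr ⊢
      linarith [hsrr]
    have hbb1 : bb K (-1-h) + bb K ((K:ℤ)-h) ≤ 1 := by
      rcases lt_or_gt_of_ne hh with hneg | hpos
      · rw [bb_eq_zero (j := (K:ℤ)-h) (by omega)]
        linarith [bb_le_one K (-1-h)]
      · rw [bb_eq_zero (j := -1-h) (by omega)]
        linarith [bb_le_one K ((K:ℤ)-h)]
    have hbb0 : 0 ≤ bb K (-1-h) + bb K ((K:ℤ)-h) :=
      add_nonneg (bb_nonneg K _) (bb_nonneg K _)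
    have hrrh : |rr K h| ≤ Q/2 := by
      rw [← hrr0]
      exact rr_abs_le K h
    have hcosdiff0 : 0 ≤ Real.cos γ - co := by linarith
    calc |c h| ≤ |(Real.sin γ / 2) * (bb K (-1-h) + bb K ((K:ℤ)-h))|
          + |(Real.cos γ - co) * rr K h| := by
          rw [hch]
          exact abs_add_le _ _
      _ ≤ Real.sin γ / 2 + (Real.cos γ - co) * (Q/2) := by
          apply add_le_add
          · rw [abs_mul, abs_of_nonneg (by linarith : (0:ℝ) ≤ Real.sin γ / 2),
              abs_of_nonneg hbb0]
            nlinarith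
          · rw [abs_mul, abs_of_nonneg hcosdiff0]
            exact mul_le_mul_of_nonneg_left hrrh hcosdiff0
      _ ≤ 3 * c 0 := by
          rw [← hc0] at *
          linarith [hkey]
  have hcM1 : c ((K:ℤ)+1) = 0 := by
    rw [hcdef]
    simp only [cc]
    rw [rr_eq_zero (m := (K:ℤ)+1-1) (Or.inl (by omega)),
      rr_eq_zero (m := (K:ℤ)+1+1) (Or.inl (by omega)),
      rr_eq_zero (m := (K:ℤ)+1) (Or.inl (by omega))]
    ring
  have hcM2 : c (-(K:ℤ)-1) = 0 := by
    rw [hcdef]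
    simp only [cc]
    rw [rr_eq_zero (m := -(K:ℤ)-1-1) (Or.inr (by omega)),
      rr_eq_zero (m := -(K:ℤ)-1+1) (Or.inr (by omega)),
      rr_eq_zero (m := -(K:ℤ)-1) (Or.inr (by omega))]
    ring
  -- real part of T as coefficient sums
  have hTre_eq : T.re = ∑ h ∈ Hs, c h * (S h).re := by
    rw [hTdef, Complex.re_sum]
    apply Finset.sum_congr rfl
    intro h _
    simp [Complex.mul_re]
  have h0mem : (0:ℤ) ∈ Hs := by
    rw [hHsdef, Finset.mem_Icc]
    omega
  have hS0 : (S 0).re = (N:ℝ) := by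
    rw [hSdef]
    simp only []
    have hone : ∀ n ∈ Finset.Icc 1 N, eR (((0:ℤ):ℝ) * x n) = 1 := by
      intro n _
      rw [eR]
      norm_num
    rw [Finset.sum_congr rfl hone, Finset.sum_const, Nat.card_Icc]
    simp
  have hsplit0 : ∑ h ∈ Hs, c h * (S h).re
      = c 0 * (S 0).re + ∑ h ∈ Hs.erase 0, c h * (S h).re :=
    (Finset.add_sum_erase Hs (fun h => c h * (S h).re) h0mem).symm
  have habsS : ∀ h : ℤ, ‖S (-h)‖ = ‖S h‖ := by
    intro h
    have hconj : S (-h) = (starRingEnd ℂ) (S h) := by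
      rw [hSdef]
      simp only []
      rw [map_sum]
      apply Finset.sum_congr rfl
      intro n _
      rw [eR, eR, ← Complex.exp_conj]
      congr 1
      simp [map_mul, Complex.conj_I, Complex.conj_ofReal, map_ofNat]
    rw [hconj, Complex.norm_conj]
  set A : ℝ := ∑ h ∈ Finset.Icc (1:ℤ) (K:ℤ), ‖S h‖ with hAdef
  have hApos : 0 ≤ A := Finset.sum_nonneg fun h _ => norm_nonneg _
  set F : ℤ → ℝ := fun h => |c h| * ‖S h‖ with hFdef
  have hrest : |∑ h ∈ Hs.erase 0, c h * (S h).re| ≤ 6 * c 0 * A := by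
    have step1 : |∑ h ∈ Hs.erase 0, c h * (S h).re| ≤ ∑ h ∈ Hs.erase 0, F h := by
      refine (Finset.abs_sum_le_sum_abs _ _).trans (Finset.sum_le_sum ?_)
      intro h _
      rw [hFdef]
      simp only []
      rw [abs_mul]
      exact mul_le_mul_of_nonneg_left (Complex.abs_re_le_norm _) (abs_nonneg _)
    have hsplitset : Hs.erase 0 = Finset.Icc (-(K:ℤ)-1) (-1) ∪ Finset.Icc 1 ((K:ℤ)+1) := by
      rw [hHsdef]
      ext a
      simp only [Finset.mem_erase, Finset.mem_Icc, Finset.mem_union]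
      omega
    have hdisj : Disjoint (Finset.Icc (-(K:ℤ)-1) (-1)) (Finset.Icc 1 ((K:ℤ)+1)) := by
      rw [Finset.disjoint_left]
      intro a ha hb
      rw [Finset.mem_Icc] at ha hb
      omega
    have hnegpart : ∑ h ∈ Finset.Icc (-(K:ℤ)-1) (-1), F h
        = ∑ h ∈ Finset.Icc (1:ℤ) ((K:ℤ)+1), F (-h) := by
      apply Finset.sum_nbij' (i := fun h : ℤ => -h) (j := fun h : ℤ => -h)
      · intro a ha
        rw [Finset.mem_Icc] at ha ⊢
        omega
      · intro a ha
        rw [Finset.mem_Icc] at ha ⊢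
        omega
      · intro a _
        omega
      · intro a _
        omega
      · intro a _
        rw [neg_neg]
    have hendterm : ∑ h ∈ Finset.Icc (1:ℤ) ((K:ℤ)+1), (F (-h) + F h)
        = ∑ h ∈ Finset.Icc (1:ℤ) (K:ℤ), (F (-h) + F h) := by
      symm
      apply Finset.sum_subset (Finset.Icc_subset_Icc le_rfl (by omega))
      intro a ha ha2
      rw [Finset.mem_Icc] at ha
      have h2 : ¬(1 ≤ a ∧ a ≤ (K:ℤ)) := fun hc => ha2 (Finset.mem_Icc.2 hc)
      have ha3 : a = (K:ℤ)+1 := by omega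
      rw [ha3, hFdef]
      simp only []
      rw [show -((K:ℤ)+1) = -(K:ℤ)-1 from by ring, hcM2, hcM1]
      simp
    have hfinal : ∑ h ∈ Finset.Icc (1:ℤ) (K:ℤ), (F (-h) + F h)
        ≤ ∑ h ∈ Finset.Icc (1:ℤ) (K:ℤ), 6 * c 0 * ‖S h‖ := by
      apply Finset.sum_le_sum
      intro h hhm
      rw [Finset.mem_Icc] at hhm
      rw [hFdef]
      simp only []
      rw [habsS h]
      have b1 := hcbound h (by omega)
      have b2 := hcbound (-h) (by omega)
      have b3 := norm_nonneg (S h)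
      nlinarith
    calc |∑ h ∈ Hs.erase 0, c h * (S h).re| ≤ ∑ h ∈ Hs.erase 0, F h := step1
      _ = ∑ h ∈ Finset.Icc (-(K:ℤ)-1) (-1), F h + ∑ h ∈ Finset.Icc (1:ℤ) ((K:ℤ)+1), F h := by
          rw [hsplitset, Finset.sum_union hdisj]
      _ = ∑ h ∈ Finset.Icc (1:ℤ) ((K:ℤ)+1), (F (-h) + F h) := by
          rw [hnegpart, ← Finset.sum_add_distrib]
      _ = ∑ h ∈ Finset.Icc (1:ℤ) (K:ℤ), (F (-h) + F h) := hendterm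
      _ ≤ ∑ h ∈ Finset.Icc (1:ℤ) (K:ℤ), 6 * c 0 * ‖S h‖ := hfinal
      _ = 6 * c 0 * A := by rw [← Finset.mul_sum, hAdef]
  -- put everything together
  have hmain : c 0 * (N:ℝ) ≤ 6 * c 0 * A := by
    have h1 : T.re = c 0 * (N:ℝ) + ∑ h ∈ Hs.erase 0, c h * (S h).re := by
      rw [hTre_eq, hsplit0, hS0]
    have h2 : -(6 * c 0 * A) ≤ ∑ h ∈ Hs.erase 0, c h * (S h).re := by
      have h3 := neg_abs_le (∑ h ∈ Hs.erase 0, c h * (S h).re)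
      linarith [hrest]
    linarith [hTre_nonpos]
  have hNA : (N:ℝ) ≤ 6 * A := by
    have h4 : c 0 * (N:ℝ) ≤ c 0 * (6 * A) := by linarith [hmain]
    exact le_of_mul_le_mul_left h4 hc0pos
  have hgoal : ∑ h ∈ Finset.Icc 1 K, ‖∑ n ∈ Finset.Icc 1 N, eR ((h:ℝ) * x n)‖ = A := by
    rw [hAdef]
    apply Finset.sum_nbij' (i := fun h : ℕ => (h:ℤ)) (j := fun h : ℤ => h.toNat)
    · intro a ha
      rw [Finset.mem_Icc] at ha ⊢
      omega
    · intro a ha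
      rw [Finset.mem_Icc] at ha ⊢
      omega
    · intro a _
      simp
    · intro a ha
      rw [Finset.mem_Icc] at ha
      omega
    · intro a _
      congr 1
  rw [ge_iff_le, div_le_iff₀ (by norm_num : (0:ℝ) < 6)]
  rw [hgoal]
  linarith [hNA]
end

section
/- Let k and l be natural numbers with k − l ≥ 2. There exists a constant C(k,l) > 0 such that for every positive real number α and every real number N ≥ 1, Σ_{1 ≤ n ≤ N} 1/(1 + α·n^{k−l}) ≤ C(k,l)·N/(1 + N^{k−l}·α)^{1/(k−l)}, where n runs over integers. -/
open Finset Real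

private lemma tele_sum (T : ℝ) : ∀ M : ℕ,
    ∑ n ∈ Finset.Icc 1 M, ((T + n - 1)⁻¹ - (T + n)⁻¹) = T⁻¹ - (T + M)⁻¹ := by
  intro M
  induction M with
  | zero => simp
  | succ m ih =>
      rw [Finset.sum_Icc_succ_top (by omega : 1 ≤ m + 1), ih]
      push_cast
      ring_nf

theorem appendix_sum_bound_one (k l : ℕ) (hkl : l + 2 ≤ k) :
    ∃ C : ℝ, C > 0 ∧ ∀ (α N : ℝ), 0 < α → 1 ≤ N →
      ∑ n ∈ Finset.Icc 1 ⌊N⌋₊, (1 + α * (n : ℝ) ^ (k - l))⁻¹ ≤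
        C * N / (1 + N ^ (k - l) * α) ^ ((1 : ℝ) / ((k : ℝ) - (l : ℝ))) := by
  set d := k - l with hd_def
  have hd2 : 2 ≤ d := by omega
  have hd0 : (0:ℝ) < (d:ℝ) := by exact_mod_cast (by omega : 0 < d)
  have hdR : (k:ℝ) - (l:ℝ) = (d:ℝ) := by
    rw [hd_def, Nat.cast_sub (by omega : l ≤ k)]
  refine ⟨2 ^ d, by positivity, ?_⟩
  intro α N hα hN
  rw [hdR]
  set T : ℝ := α ^ (-((d:ℝ))⁻¹) with hT_def
  have hT : 0 < T := Real.rpow_pos_of_pos hα _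
  have hN0 : (0:ℝ) < N := by linarith
  have hTd : T ^ d = α⁻¹ := by
    rw [hT_def, ← Real.rpow_natCast (α ^ (-((d:ℝ))⁻¹)) d, ← Real.rpow_mul hα.le,
      neg_mul, inv_mul_cancel₀ (ne_of_gt hd0), Real.rpow_neg_one]
  have hαT : α = (T ^ d)⁻¹ := by rw [hTd, inv_inv]
  set M := ⌊N⌋₊ with hM
  have hMN : (M:ℝ) ≤ N := Nat.floor_le (by linarith)
  have h2d : (2:ℝ) ^ d = 2 * 2 ^ (d - 1) := by
    rw [← pow_succ']; congr 1; omega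
  -- pointwise bound
  have key : ∀ n ∈ Finset.Icc 1 M,
      (1 + α * (n:ℝ) ^ d)⁻¹ ≤ 2 ^ d * T ^ 2 * ((T + n - 1)⁻¹ - (T + n)⁻¹) := by
    intro n hn
    have hn1 : 1 ≤ n := (Finset.mem_Icc.mp hn).1
    have hnR : (1:ℝ) ≤ (n:ℝ) := by exact_mod_cast hn1
    have h1 : (0:ℝ) < T + n - 1 := by linarith
    have h2 : (0:ℝ) < T + n := by linarith
    have hprod : (0:ℝ) < (T + n - 1) * (T + n) := by positivity
    have hdiff : (T + n - 1)⁻¹ - (T + n)⁻¹ = ((T + n - 1) * (T + n))⁻¹ := by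
      field_simp
      ring
    have hbase : 1 + α * (n:ℝ) ^ d = (T ^ d + (n:ℝ) ^ d) / T ^ d := by
      rw [hαT]; field_simp
    have hpos : (0:ℝ) < T ^ d + (n:ℝ) ^ d := by positivity
    have hA : (T + n) ^ d ≤ 2 ^ (d - 1) * (T ^ d + (n:ℝ) ^ d) :=
      add_pow_le hT.le (by linarith) d
    have hB : T ^ (d - 2) * ((T + n - 1) * (T + n)) ≤ (T + n) ^ d := by
      have hsplit : (T + n) ^ d = (T + n) ^ (d - 2) * (T + n) ^ 2 := by
        rw [← pow_add]; congr 1; omega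
      rw [hsplit]
      have h3 : T ^ (d - 2) ≤ (T + n) ^ (d - 2) :=
        pow_le_pow_left₀ hT.le (by linarith) _
      have h4 : (T + n - 1) * (T + n) ≤ (T + n) ^ 2 := by nlinarith
      exact mul_le_mul h3 h4 (le_of_lt hprod) (by positivity)
    have hTd2 : T ^ d = T ^ (d - 2) * T ^ 2 := by
      rw [← pow_add]; congr 1; omega
    have main : T ^ d * ((T + n - 1) * (T + n)) ≤ 2 ^ d * T ^ 2 * (T ^ d + (n:ℝ) ^ d) := by
      calc T ^ d * ((T + n - 1) * (T + n))
          = T ^ 2 * (T ^ (d - 2) * ((T + n - 1) * (T + n))) := by rw [hTd2]; ring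
        _ ≤ T ^ 2 * ((T + n) ^ d) := mul_le_mul_of_nonneg_left hB (sq_nonneg T)
        _ ≤ T ^ 2 * (2 ^ (d - 1) * (T ^ d + (n:ℝ) ^ d)) :=
            mul_le_mul_of_nonneg_left hA (sq_nonneg T)
        _ ≤ 2 ^ d * T ^ 2 * (T ^ d + (n:ℝ) ^ d) := by
            rw [h2d]
            nlinarith [mul_nonneg (sq_nonneg T)
              (mul_nonneg (by positivity : (0:ℝ) ≤ (2:ℝ) ^ (d-1)) hpos.le)]
    rw [hdiff, ← div_eq_mul_inv, hbase, inv_div, div_le_div_iff₀ hpos hprod]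
    exact main
  calc ∑ n ∈ Finset.Icc 1 M, (1 + α * (n:ℝ) ^ d)⁻¹
      ≤ ∑ n ∈ Finset.Icc 1 M, 2 ^ d * T ^ 2 * ((T + n - 1)⁻¹ - (T + n)⁻¹) :=
        Finset.sum_le_sum key
    _ = 2 ^ d * T ^ 2 * (T⁻¹ - (T + M)⁻¹) := by rw [← Finset.mul_sum, tele_sum]
    _ = 2 ^ d * (T * M / (T + M)) := by
        have h2 : (0:ℝ) < T + M := by positivity
        field_simp
        ring
    _ ≤ 2 ^ d * (T * N / (T + N)) := by
        have h2 : (0:ℝ) < T + M := by positivity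
        have h3 : (0:ℝ) < T + N := by positivity
        have hstep : T * M / (T + M) ≤ T * N / (T + N) := by
          rw [div_le_div_iff₀ h2 h3]
          nlinarith [mul_le_mul_of_nonneg_left hMN (sq_nonneg T)]
        exact mul_le_mul_of_nonneg_left hstep (by positivity)
    _ ≤ 2 ^ d * N / (1 + N ^ d * α) ^ ((1:ℝ) / (d:ℝ)) := by
        set A : ℝ := (1 + N ^ d * α) ^ ((1:ℝ) / (d:ℝ)) with hA_def
        have hbase : (0:ℝ) < 1 + N ^ d * α := by positivity
        have hApos : 0 < A := Real.rpow_pos_of_pos hbase _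
        have hTN : (0:ℝ) < T + N := by positivity
        have hA2 : A * T ≤ T + N := by
          have hsum : 1 + N ^ d * α = (T ^ d + N ^ d) / T ^ d := by
            rw [hαT]; field_simp
          have hle : T ^ d + N ^ d ≤ (T + N) ^ d :=
            pow_add_pow_le hT.le hN0.le (by omega)
          have hle2 : 1 + N ^ d * α ≤ ((T + N) / T) ^ d := by
            rw [hsum, div_pow]
            exact div_le_div_of_nonneg_right hle (by positivity)
          have hmono : A ≤ (((T + N) / T) ^ d) ^ ((1:ℝ) / (d:ℝ)) :=
            Real.rpow_le_rpow hbase.le hle2 (by positivity)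
          have heq : (((T + N) / T) ^ d) ^ ((1:ℝ) / (d:ℝ)) = (T + N) / T := by
            rw [← Real.rpow_natCast ((T + N) / T) d, ← Real.rpow_mul (by positivity),
              mul_one_div, div_self hd0.ne', Real.rpow_one]
          have hAle : A ≤ (T + N) / T := heq ▸ hmono
          calc A * T ≤ ((T + N) / T) * T := mul_le_mul_of_nonneg_right hAle hT.le
            _ = T + N := by field_simp
        have hstep : T * N / (T + N) ≤ N / A := by
          rw [div_le_div_iff₀ hTN hApos]
          calc T * N * A = N * (A * T) := by ring
            _ ≤ N * (T + N) := mul_le_mul_of_nonneg_left hA2 hN0.le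
        calc 2 ^ d * (T * N / (T + N)) ≤ 2 ^ d * (N / A) :=
              mul_le_mul_of_nonneg_left hstep (by positivity)
          _ = 2 ^ d * N / A := by ring
end

section
/- Let k and l be natural numbers with k − l ≥ 2. There exists a constant C(k,l) > 0 such that for every positive real number α and every real number N ≥ 2, Σ_{1 ≤ n ≤ N} 1/(1 + α·n^{k−l})^{1/(k−l)} ≤ C(k,l)·N·log N/(1 + N^{k−l}·α)^{1/(k−l)}, where n runs over integers. -/
theorem appendix_sum_bound_two (k l : ℕ) (hkl : l + 2 ≤ k) :
    ∃ C : ℝ, C > 0 ∧ ∀ (α N : ℝ), 0 < α → 2 ≤ N →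
      ∑ n ∈ Finset.Icc 1 ⌊N⌋₊,
          ((1 + α * (n : ℝ) ^ (k - l)) ^ ((1 : ℝ) / ((k : ℝ) - (l : ℝ))))⁻¹ ≤
        C * N * Real.log N / (1 + N ^ (k - l) * α) ^ ((1 : ℝ) / ((k : ℝ) - (l : ℝ))) := by
  refine ⟨1 + 1 / Real.log 2, by positivity, ?_⟩
  intro α N hα hN
  set m : ℕ := k - l with hm
  have hm2 : 2 ≤ m := le_tsub_of_add_le_left hkl
  have hcast : (k : ℝ) - (l : ℝ) = (m : ℝ) := by
    rw [hm, Nat.cast_sub (by omega)]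
  set e : ℝ := (1 : ℝ) / ((k : ℝ) - (l : ℝ)) with he
  have hmpos : (0:ℝ) < m := by positivity
  have hepos : 0 < e := by rw [he, hcast]; positivity
  have hN0 : 0 < N := by linarith
  have hDpos : (0:ℝ) < 1 + N ^ m * α := by positivity
  have hDel : (0:ℝ) < (1 + N ^ m * α) ^ e := Real.rpow_pos_of_pos hDpos e
  -- per-term bound
  have key : ∀ n ∈ Finset.Icc 1 ⌊N⌋₊,
      ((1 + α * (n : ℝ) ^ m) ^ e)⁻¹ ≤ (N / n) * ((1 + N ^ m * α) ^ e)⁻¹ := by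
    intro n hn
    simp only [Finset.mem_Icc] at hn
    have hn1 : (1:ℝ) ≤ n := by exact_mod_cast hn.1
    have hnN : (n:ℝ) ≤ N := (Nat.le_floor_iff hN0.le).mp hn.2
    have hn0 : (0:ℝ) < n := by linarith
    have hq : (1:ℝ) ≤ N / n := (one_le_div hn0).mpr hnN
    have hTpos : (0:ℝ) < 1 + α * (n:ℝ) ^ m := by positivity
    have h1 : 1 + N ^ m * α ≤ (N / n) ^ m * (1 + α * (n:ℝ) ^ m) := by
      have hexp : (N / n) ^ m * ((n:ℝ) ^ m) = N ^ m := by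
        rw [div_pow, div_mul_cancel₀]
        positivity
      have h2 : (1:ℝ) ≤ (N / n) ^ m := one_le_pow₀ hq
      nlinarith [mul_pos hα (pow_pos hn0 m)]
    have h3 : (1 + N ^ m * α) ^ e ≤ ((N / n) ^ m * (1 + α * (n:ℝ) ^ m)) ^ e :=
      Real.rpow_le_rpow hDpos.le h1 hepos.le
    have h4 : ((N / n) ^ m * (1 + α * (n:ℝ) ^ m)) ^ e
        = (N / n) * (1 + α * (n:ℝ) ^ m) ^ e := by
      rw [Real.mul_rpow (by positivity) hTpos.le]
      congr 1
      rw [← Real.rpow_natCast (N / n) m, ← Real.rpow_mul (by positivity),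
        he, hcast]
      rw [mul_one_div, div_self (by positivity), Real.rpow_one]
    rw [h4] at h3
    rw [inv_eq_one_div, ← div_eq_mul_inv,
      div_le_div_iff₀ (Real.rpow_pos_of_pos hTpos e) hDel, one_mul]
    linarith [h3]
  calc ∑ n ∈ Finset.Icc 1 ⌊N⌋₊, ((1 + α * (n : ℝ) ^ m) ^ e)⁻¹
      ≤ ∑ n ∈ Finset.Icc 1 ⌊N⌋₊, (N / n) * ((1 + N ^ m * α) ^ e)⁻¹ :=
        Finset.sum_le_sum key
    _ = N * (∑ n ∈ Finset.Icc 1 ⌊N⌋₊, ((n:ℝ))⁻¹) * ((1 + N ^ m * α) ^ e)⁻¹ := by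
        rw [Finset.mul_sum, ← Finset.sum_mul]
        simp only [div_eq_mul_inv]
    _ ≤ N * (1 + Real.log N) * ((1 + N ^ m * α) ^ e)⁻¹ := by
        have hh : (∑ n ∈ Finset.Icc 1 ⌊N⌋₊, ((n:ℝ))⁻¹) = (harmonic ⌊N⌋₊ : ℝ) := by
          rw [harmonic]
          push_cast
          rw [← Finset.Ico_add_one_right_eq_Icc, Finset.sum_Ico_eq_sum_range]
          push_cast
          exact Finset.sum_congr rfl fun i _ => by rw [add_comm]
        rw [hh]
        have := harmonic_floor_le_one_add_log N (by linarith)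
        gcongr
    _ ≤ (1 + 1 / Real.log 2) * N * Real.log N * ((1 + N ^ m * α) ^ e)⁻¹ := by
        have hlog2 : 0 < Real.log 2 := Real.log_pos (by norm_num)
        have hlogN : Real.log 2 ≤ Real.log N := Real.log_le_log (by norm_num) hN
        have h1 : (1:ℝ) = (1 / Real.log 2) * Real.log 2 := by field_simp
        have hc : 0 ≤ ((1 + N ^ m * α) ^ e)⁻¹ := by positivity
        have h2 : N * (1 + Real.log N) ≤ (1 + 1 / Real.log 2) * N * Real.log N := by
          nlinarith [mul_le_mul_of_nonneg_left hlogN (le_of_lt (by positivity : (0:ℝ) < 1 / Real.log 2))]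
        exact mul_le_mul_of_nonneg_right h2 hc
    _ = (1 + 1 / Real.log 2) * N * Real.log N / (1 + N ^ m * α) ^ e := by
        ring
end
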